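/- Let φ(q) = (γ²/2)q² − (d + γ²/2)q + d with 0 < γ² < 2d, and let q₊ = √(2d)/|γ|. If τ: ℝ → ℝ is a convex function satisfying τ(q) = φ(q) for all q ∈ [−q₊, q₊] and τ(q) ≤ (φ(q₊)/q₊)·q for all q ≥ q₊, then τ(q) = φ'(q₊)·q for all q ≥ q₊. -/

import Mathlib

open Set

/-- Let `φ(q) = (γ²/2)q² − (d + γ²/2)q + d` with `0 < γ² < 2d`, and `q₊ = √(2d)/|γ|`.
If `τ : ℝ → ℝ` is convex, `τ = φ` on `[−q₊, q₊]`, and `τ q ≤ (φ q₊ / q₊) * q` for all `q ≥ q₊`,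
then `τ q = φ'(q₊) * q` for all `q ≥ q₊`. -/
theorem stmt3 (d : ℕ) (hd : 1 ≤ d) (γ : ℝ) (hγ0 : γ ≠ 0) (hγ : γ ^ 2 < 2 * d)
    (φ : ℝ → ℝ) (hφ : ∀ q, φ q = γ ^ 2 / 2 * q ^ 2 - (↑d + γ ^ 2 / 2) * q + ↑d)
    (qp : ℝ) (hqp : qp = Real.sqrt (2 * d) / |γ|)
    (τ : ℝ → ℝ) (hconv : ConvexOn ℝ Set.univ τ)
    (heq : ∀ q ∈ Set.Icc (-qp) qp, τ q = φ q)
    (hub : ∀ q, qp ≤ q → τ q ≤ φ qp / qp * q) :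
    ∀ q, qp ≤ q → τ q = deriv φ qp * q := by
  have hγ2 : (0:ℝ) < γ ^ 2 := by positivity
  have hd1 : (1:ℝ) ≤ (d:ℝ) := by exact_mod_cast hd
  have h2d : (0:ℝ) < 2 * d := by linarith
  have hqp0 : 0 < qp := by
    rw [hqp]
    exact div_pos (Real.sqrt_pos.mpr h2d) (abs_pos.mpr hγ0)
  have hφ' : φ = fun q => γ ^ 2 / 2 * q ^ 2 - (↑d + γ ^ 2 / 2) * q + ↑d := funext hφ
  have hc : deriv φ qp = γ ^ 2 * qp - ((d:ℝ) + γ ^ 2 / 2) := by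
    have hD : HasDerivAt φ (γ ^ 2 * qp - ((d:ℝ) + γ ^ 2 / 2)) qp := by
      rw [hφ']
      have h1 := (hasDerivAt_pow 2 qp).const_mul (γ ^ 2 / 2)
      have h2 := (hasDerivAt_id qp).const_mul ((d:ℝ) + γ ^ 2 / 2)
      have h3 := (h1.sub h2).add_const (d:ℝ)
      refine h3.congr_deriv ?_
      push_cast
      ring
    exact hD.deriv
  set c : ℝ := deriv φ qp with hcdef
  have hqpsq : γ ^ 2 / 2 * qp ^ 2 = (d:ℝ) := by
    rw [hqp, div_pow, sq_abs, Real.sq_sqrt h2d.le]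
    field_simp
  have hφqp : φ qp = c * qp := by
    rw [hφ qp, hc]
    nlinarith [hqpsq]
  intro q hq
  rcases eq_or_lt_of_le hq with h | h
  · rw [← h, heq qp ⟨by linarith, le_rfl⟩, hφqp]
  · have hle : τ q ≤ c * q := by
      have h0 := hub q hq
      rw [hφqp, mul_div_assoc, div_self hqp0.ne', mul_one] at h0
      exact h0
    have hge : c * q ≤ τ q := by
      refine le_of_forall_pos_le_add ?_
      intro ε hε
      set k : ℝ := γ ^ 2 / 2 * (q - qp) with hk
      have hk0 : 0 < k := mul_pos (by positivity) (sub_pos.mpr h)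
      set δ : ℝ := min qp (ε / k) with hδ
      have hδ0 : 0 < δ := lt_min hqp0 (div_pos hε hk0)
      set a : ℝ := qp - δ with ha
      have ha1 : -qp ≤ a := by
        have := min_le_left qp (ε / k)
        simp only [ha, hδ] at *
        linarith
      have ha2 : a < qp := by simp only [ha]; linarith
      have hslope := hconv.slope_mono_adjacent (mem_univ a) (mem_univ q) ha2 h
      have hτa : τ a = φ a := heq a ⟨ha1, by linarith⟩
      have hτqp : τ qp = φ qp := heq qp ⟨by linarith, le_rfl⟩
      have hne : qp - a ≠ 0 := by simp only [ha]; intro hcon; linarith [hδ0, sub_sub_cancel qp δ]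
      have hsv : (φ qp - φ a) / (qp - a) = c - γ ^ 2 / 2 * (qp - a) := by
        rw [hφ qp, hφ a, hc, div_eq_iff hne]
        ring
      rw [hτa, hτqp, hsv] at hslope
      have h1 : (c - γ ^ 2 / 2 * (qp - a)) * (q - qp) ≤ τ q - φ qp :=
        (le_div_iff₀ (sub_pos.mpr h)).mp hslope
      have hqa : qp - a = δ := by simp [ha]
      have hδk : k * δ ≤ ε := by
        calc k * δ ≤ k * (ε / k) := mul_le_mul_of_nonneg_left (min_le_right _ _) hk0.le
          _ = ε := by field_simp
      have h2 : c * q - k * δ ≤ τ q := by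
        have heq2 : c * q - k * δ = φ qp + (c - γ ^ 2 / 2 * (qp - a)) * (q - qp) := by
          rw [hφqp, hqa, hk]; ring
        linarith [h1, heq2.ge, heq2.le]
      linarith
    linarith
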